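/- The super quantum binomial coefficient [a; t]_{q,p} lies in ℤ[q, q^{-1}] for every a ∈ ℤ and t ∈ ℕ. -/

import Mathlib

open scoped BigOperators

/-- The indeterminate `q` in the field of rational functions `ℚ(q)`. -/
noncomputable def qq : RatFunc ℚ := RatFunc.X

/-- The super quantum binomial coefficient `[a; t]_{q,p}` for `a ∈ ℤ`, `t ∈ ℕ`. -/
noncomputable def sqBinom (p : ℕ) (a : ℤ) (t : ℕ) : RatFunc ℚ :=
  (∏ s ∈ Finset.range t, (((-1) ^ p * qq) ^ (a - (s : ℤ)) - qq ^ ((s : ℤ) - a))) /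
    (∏ s ∈ Finset.range t, (((-1) ^ p * qq) ^ ((s : ℤ) + 1) - qq ^ (-((s : ℤ) + 1))))

/-!
Writing `x = (-1)^p q` and `y = q`, the coefficient `[a; t]` satisfies the Pascal-type recurrence
`[a; t+1] = x^(t+1) [a-1; t+1] + y^(t+1-a) [a-1; t]`, which comes from splitting the numerator
factor `x^a - y^(-a)` as `x^(t+1) (x^(a-1-t) - y^(t+1-a)) + y^(t+1-a) (x^(t+1) - y^(-(t+1)))`.
Since `x` is a unit of `ℤ[q, q⁻¹]`, the recurrence can be run both upwards and downwards in `a`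
starting from `[0; t+1] = 0` and `[a; 0] = 1`. It only needs the denominators to be nonzero,
which holds as soon as `x y` is not a root of unity.
-/

theorem Subring.zpow_mem_of_inv_mem {K : Type*} [DivisionRing K] {S : Subring K} {x : K}
    (hx : x ∈ S) (hx' : x⁻¹ ∈ S) (m : ℤ) : x ^ m ∈ S := by
  cases m with
  | ofNat n => simpa using pow_mem hx n
  | negSucc n => simpa [zpow_negSucc, inv_pow] using pow_mem hx' (n + 1)

section GaussBinom

variable {F : Type*} [Field F] {x y : F}

variable (x y) in
noncomputable def gaussBinom (a : ℤ) (t : ℕ) : F :=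
  (∏ s ∈ Finset.range t, (x ^ (a - (s : ℤ)) - y ^ ((s : ℤ) - a))) /
    ∏ s ∈ Finset.range t, (x ^ ((s : ℤ) + 1) - y ^ (-((s : ℤ) + 1)))

@[simp]
theorem gaussBinom_zero_right (a : ℤ) : gaussBinom x y a 0 = 1 := by
  simp [gaussBinom]

@[simp]
theorem gaussBinom_zero_succ (t : ℕ) : gaussBinom x y 0 (t + 1) = 0 := by
  simp [gaussBinom, Finset.prod_range_succ']

theorem zpow_succ_sub_zpow_neg_succ_ne_zero (hy : y ≠ 0) (hxy : ¬IsOfFinOrder (x * y)) (n : ℕ) :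
    x ^ ((n : ℤ) + 1) - y ^ (-((n : ℤ) + 1)) ≠ 0 := by
  rw [← Nat.cast_succ, zpow_neg, zpow_natCast, zpow_natCast, sub_ne_zero]
  intro h
  refine hxy (isOfFinOrder_iff_pow_eq_one.2 ⟨n + 1, n.succ_pos, ?_⟩)
  rw [mul_pow, h, inv_mul_cancel₀ (pow_ne_zero _ hy)]

theorem gaussBinom_succ (hx : x ≠ 0) (hy : y ≠ 0) (hxy : ¬IsOfFinOrder (x * y)) (a : ℤ) (t : ℕ) :
    gaussBinom x y a (t + 1) =
      x ^ ((t : ℤ) + 1) * gaussBinom x y (a - 1) (t + 1) +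
        y ^ ((t : ℤ) + 1 - a) * gaussBinom x y (a - 1) t := by
  have hsplit : x ^ a - y ^ (-a) =
      x ^ ((t : ℤ) + 1) * (x ^ (a - 1 - t) - y ^ ((t : ℤ) - (a - 1))) +
        y ^ ((t : ℤ) + 1 - a) * (x ^ ((t : ℤ) + 1) - y ^ (-((t : ℤ) + 1))) := by
    rw [mul_sub, mul_sub, ← zpow_add₀ hx, ← zpow_add₀ hy]
    ring_nf
  have hshift : ∀ s : ℕ, x ^ (a - ((s + 1 : ℕ) : ℤ)) - y ^ (((s + 1 : ℕ) : ℤ) - a) =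
      x ^ (a - 1 - s) - y ^ ((s : ℤ) - (a - 1)) := fun s => by
    push_cast; ring_nf
  have hden : ∏ s ∈ Finset.range t, (x ^ ((s : ℤ) + 1) - y ^ (-((s : ℤ) + 1))) ≠ 0 :=
    Finset.prod_ne_zero_iff.2 fun n _ => zpow_succ_sub_zpow_neg_succ_ne_zero hy hxy n
  have hlast := zpow_succ_sub_zpow_neg_succ_ne_zero hy hxy t
  simp only [gaussBinom]
  rw [Finset.prod_range_succ' (fun s : ℕ => x ^ (a - (s : ℤ)) - y ^ ((s : ℤ) - a)),
    Finset.prod_range_succ (fun s : ℕ => x ^ (a - 1 - (s : ℤ)) - y ^ ((s : ℤ) - (a - 1))),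
    Finset.prod_range_succ (fun s : ℕ => x ^ ((s : ℤ) + 1) - y ^ (-((s : ℤ) + 1)))]
  simp only [hshift, Nat.cast_zero, sub_zero, zero_sub, hsplit]
  field_simp

theorem gaussBinom_sub_one_succ (hx : x ≠ 0) (hy : y ≠ 0) (hxy : ¬IsOfFinOrder (x * y)) (a : ℤ)
    (t : ℕ) : gaussBinom x y (a - 1) (t + 1) = x ^ (-((t : ℤ) + 1)) *
      (gaussBinom x y a (t + 1) - y ^ ((t : ℤ) + 1 - a) * gaussBinom x y (a - 1) t) := by
  rw [gaussBinom_succ hx hy hxy a t, zpow_neg, add_sub_cancel_right,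
    inv_mul_cancel_left₀ (zpow_ne_zero _ hx)]

theorem gaussBinom_mem (S : Subring F) (hxS : x ∈ S) (hxS' : x⁻¹ ∈ S) (hyS : y ∈ S)
    (hyS' : y⁻¹ ∈ S) (hx : x ≠ 0) (hy : y ≠ 0) (hxy : ¬IsOfFinOrder (x * y)) (a : ℤ) (t : ℕ) :
    gaussBinom x y a t ∈ S := by
  have hxpow := Subring.zpow_mem_of_inv_mem hxS hxS'
  have hypow := Subring.zpow_mem_of_inv_mem hyS hyS'
  induction t generalizing a with
  | zero => simp [S.one_mem]
  | succ t iht =>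
    induction a using Int.induction_on with
    | zero => simp [S.zero_mem]
    | succ n ihn =>
      rw [gaussBinom_succ hx hy hxy, add_sub_cancel_right]
      exact add_mem (mul_mem (hxpow _) ihn) (mul_mem (hypow _) (iht _))
    | pred n ihn =>
      rw [gaussBinom_sub_one_succ hx hy hxy]
      exact mul_mem (hxpow _) (sub_mem ihn (mul_mem (hypow _) (iht _)))

end GaussBinom

theorem qq_not_isOfFinOrder : ¬IsOfFinOrder qq := fun h =>
  Polynomial.not_isUnit_X <| IsOfFinOrder.isUnit <|
    (RatFunc.algebraMap_injective ℚ).isOfFinOrder_iff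
      (f := (algebraMap (Polynomial ℚ) (RatFunc ℚ)).toMonoidHom) |>.1 <| by
        simpa [qq] using h

theorem sqBinom_mem_laurent_general (p : ℕ) (a : ℤ) (t : ℕ) :
    sqBinom p a t ∈ Subring.closure ({qq, qq⁻¹} : Set (RatFunc ℚ)) := by
  set S := Subring.closure ({qq, qq⁻¹} : Set (RatFunc ℚ))
  have hq : qq ∈ S := Subring.subset_closure (by simp)
  have hq' : qq⁻¹ ∈ S := Subring.subset_closure (by simp)
  have hsign : (-1 : RatFunc ℚ) ^ p ∈ S := pow_mem (neg_mem S.one_mem) p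
  have hq0 : qq ≠ 0 := RatFunc.X_ne_zero
  have hsign_inv : ((-1 : RatFunc ℚ) ^ p * qq)⁻¹ = (-1) ^ p * qq⁻¹ := by
    rw [mul_inv, ← inv_pow, inv_neg_one]
  have hsq : ((-1 : RatFunc ℚ) ^ p * qq * qq) ^ 2 = qq ^ 4 := by
    rw [mul_pow, mul_pow, ← pow_mul, mul_comm p, pow_mul, neg_one_sq, one_pow]
    ring
  show gaussBinom ((-1) ^ p * qq) qq a t ∈ S
  refine gaussBinom_mem S (mul_mem hsign hq) ?_ hq hq' (by simp [hq0]) hq0 ?_ a t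
  · exact hsign_inv ▸ mul_mem hsign hq'
  · intro h
    exact qq_not_isOfFinOrder ((hsq ▸ h.pow).of_pow four_ne_zero)

/-- `[a; t]_{q,p}` lies in the ring of Laurent polynomials with integer
coefficients `ℤ[q, q⁻¹]`, i.e. in the subring of `ℚ(q)` generated by `q` and `q⁻¹`. -/
theorem sqBinom_mem_laurent (p : ℕ) (hp : p = 0 ∨ p = 1) (a : ℤ) (t : ℕ) :
    sqBinom p a t ∈ Subring.closure ({qq, qq⁻¹} : Set (RatFunc ℚ)) :=
  sqBinom_mem_laurent_general p a t
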